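/- Let L, T > 0, let m ≥ 1 and n be real numbers, let S̄ : [0,L] → ℝ be continuous, and let (h,s) be a classical solution of the tear-film system with exponents (m,n) on [0,L]×[0,T]. Suppose λ > 0 satisfies λ ≤ S̄(x) for all x ∈ [0,L] and λ ≤ s(x,0) ≤ sup_{[0,L]} S̄ for all x ∈ [0,L]. Then the fluid mass is uniformly bounded: for every t ∈ [0,T], ∫₀^L h(x,t) dx ≤ (1/λ) ∫₀^L h(x,0) s(x,0) dx. -/

import Mathlib

open Set MeasureTheory intervalIntegral Filter Topology

/-- A classical solution of the tear-film system
`h_t = −(hⁿ h_{xxx})_x − hᵐ(S̄ − s)`,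
`s_t = s_{xx} + (h_x/h − h^{n−1} h_{xxx}) s_x + s(S̄ − s) h^{m−1}`
on `[0,L] × [0,T]`, with `h > 0`, `h` four times and `s` twice continuously
differentiable in `x`, both continuously differentiable in `t` (all partial
derivatives jointly continuous), subject to the boundary conditions
`h_x = h_{xxx} = s_x = 0` at `x = 0` and `x = L`. -/
structure TearFilmSolution (L T m n : ℝ) (Sbar : ℝ → ℝ) where
  h : ℝ → ℝ → ℝ
  s : ℝ → ℝ → ℝ
  hx : ℝ → ℝ → ℝ
  hxx : ℝ → ℝ → ℝ
  hxxx : ℝ → ℝ → ℝ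
  hxxxx : ℝ → ℝ → ℝ
  ht : ℝ → ℝ → ℝ
  sx : ℝ → ℝ → ℝ
  sxx : ℝ → ℝ → ℝ
  st : ℝ → ℝ → ℝ
  h_pos : ∀ x ∈ Icc 0 L, ∀ t ∈ Icc 0 T, 0 < h x t
  hasDeriv_hx : ∀ t ∈ Icc 0 T, ∀ x ∈ Icc 0 L,
    HasDerivWithinAt (fun x' => h x' t) (hx x t) (Icc 0 L) x
  hasDeriv_hxx : ∀ t ∈ Icc 0 T, ∀ x ∈ Icc 0 L,
    HasDerivWithinAt (fun x' => hx x' t) (hxx x t) (Icc 0 L) x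
  hasDeriv_hxxx : ∀ t ∈ Icc 0 T, ∀ x ∈ Icc 0 L,
    HasDerivWithinAt (fun x' => hxx x' t) (hxxx x t) (Icc 0 L) x
  hasDeriv_hxxxx : ∀ t ∈ Icc 0 T, ∀ x ∈ Icc 0 L,
    HasDerivWithinAt (fun x' => hxxx x' t) (hxxxx x t) (Icc 0 L) x
  hasDeriv_ht : ∀ x ∈ Icc 0 L, ∀ t ∈ Icc 0 T,
    HasDerivWithinAt (fun t' => h x t') (ht x t) (Icc 0 T) t
  hasDeriv_sx : ∀ t ∈ Icc 0 T, ∀ x ∈ Icc 0 L,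
    HasDerivWithinAt (fun x' => s x' t) (sx x t) (Icc 0 L) x
  hasDeriv_sxx : ∀ t ∈ Icc 0 T, ∀ x ∈ Icc 0 L,
    HasDerivWithinAt (fun x' => sx x' t) (sxx x t) (Icc 0 L) x
  hasDeriv_st : ∀ x ∈ Icc 0 L, ∀ t ∈ Icc 0 T,
    HasDerivWithinAt (fun t' => s x t') (st x t) (Icc 0 T) t
  cont_h : ContinuousOn (fun p : ℝ × ℝ => h p.1 p.2) (Icc 0 L ×ˢ Icc 0 T)
  cont_s : ContinuousOn (fun p : ℝ × ℝ => s p.1 p.2) (Icc 0 L ×ˢ Icc 0 T)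
  cont_hx : ContinuousOn (fun p : ℝ × ℝ => hx p.1 p.2) (Icc 0 L ×ˢ Icc 0 T)
  cont_hxx : ContinuousOn (fun p : ℝ × ℝ => hxx p.1 p.2) (Icc 0 L ×ˢ Icc 0 T)
  cont_hxxx : ContinuousOn (fun p : ℝ × ℝ => hxxx p.1 p.2) (Icc 0 L ×ˢ Icc 0 T)
  cont_hxxxx : ContinuousOn (fun p : ℝ × ℝ => hxxxx p.1 p.2) (Icc 0 L ×ˢ Icc 0 T)
  cont_ht : ContinuousOn (fun p : ℝ × ℝ => ht p.1 p.2) (Icc 0 L ×ˢ Icc 0 T)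
  cont_sx : ContinuousOn (fun p : ℝ × ℝ => sx p.1 p.2) (Icc 0 L ×ˢ Icc 0 T)
  cont_sxx : ContinuousOn (fun p : ℝ × ℝ => sxx p.1 p.2) (Icc 0 L ×ˢ Icc 0 T)
  cont_st : ContinuousOn (fun p : ℝ × ℝ => st p.1 p.2) (Icc 0 L ×ˢ Icc 0 T)
  pde_h : ∀ x ∈ Icc 0 L, ∀ t ∈ Icc 0 T,
    ht x t = -(n * h x t ^ (n - 1) * hx x t * hxxx x t + h x t ^ n * hxxxx x t)
      - h x t ^ m * (Sbar x - s x t)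
  pde_s : ∀ x ∈ Icc 0 L, ∀ t ∈ Icc 0 T,
    st x t = sxx x t + (hx x t / h x t - h x t ^ (n - 1) * hxxx x t) * sx x t
      + s x t * (Sbar x - s x t) * h x t ^ (m - 1)
  bc : ∀ t ∈ Icc 0 T,
    hx 0 t = 0 ∧ hx L t = 0 ∧ hxxx 0 t = 0 ∧ hxxx L t = 0 ∧ sx 0 t = 0 ∧ sx L t = 0


/-!
The density `h s` is conserved in mean: by the two equations, `∂ₜ(h s)` is the `x`-derivative of
the flux `h s_x - hⁿ h_xxx s`, which vanishes at both ends by the boundary conditions, so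
`∫ h s dx` does not depend on `t`. On the other hand `s ≥ λ` persists: at a first time where `s`
touched a level `c < λ`, at a point minimising `s` in space, one would have `s_x = 0`,
`s_xx ≥ 0` and `s_t ≤ 0`, whereas the equation gives `s_t - s_xx = c (S̄ - c) h^{m-1} > 0`. Hence
`λ ∫ h dx ≤ ∫ h s dx = ∫ h₀ s₀ dx`.
-/

lemma HasDerivWithinAt.nonpos_of_isMinOn_Icc_right {f : ℝ → ℝ} {f' a b : ℝ} (hab : a < b)
    (hf : HasDerivWithinAt f f' (Icc a b) b) (hmin : IsMinOn f (Icc a b) b) : f' ≤ 0 := by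
  have hcone : a - b ∈ posTangentConeAt (Icc a b) b :=
    sub_mem_posTangentConeAt_of_segment_subset (by rw [segment_symm, segment_eq_Icc hab.le])
  have hnonneg := hmin.localize.hasFDerivWithinAt_nonneg hf.hasFDerivWithinAt hcone
  simp only [ContinuousLinearMap.toSpanSingleton_apply, smul_eq_mul] at hnonneg
  exact nonpos_of_mul_nonneg_right hnonneg (sub_neg.mpr hab)

lemma exists_eq_slope_of_hasDerivWithinAt_Icc {f f' : ℝ → ℝ} {a b x y : ℝ}
    (hf : ∀ z ∈ Icc a b, HasDerivWithinAt f (f' z) (Icc a b) z) (hx : x ∈ Icc a b)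
    (hy : y ∈ Icc a b) (hxy : x < y) : ∃ ξ ∈ Ioo x y, f' ξ = slope f x y := by
  have hsub : Icc x y ⊆ Icc a b := Icc_subset_Icc hx.1 hy.2
  rw [slope_def_field]
  refine exists_hasDerivAt_eq_slope f f' hxy
    (fun z hz => (hf z (hsub hz)).continuousWithinAt.mono hsub) fun z hz => ?_
  exact (hf z (hsub (Ioo_subset_Icc_self hz))).hasDerivAt
    (Icc_mem_nhds (hx.1.trans_lt hz.1) (hz.2.trans_le hy.2))

lemma HasDerivWithinAt.nonneg_of_isMinOn_Icc {f f' : ℝ → ℝ} {f'' a b x₀ : ℝ} (hab : a < b)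
    (hx₀ : x₀ ∈ Icc a b) (hf : ∀ x ∈ Icc a b, HasDerivWithinAt f (f' x) (Icc a b) x)
    (hf' : HasDerivWithinAt f' f'' (Icc a b) x₀) (hmin : IsMinOn f (Icc a b) x₀)
    (hcrit : f' x₀ = 0) : 0 ≤ f'' := by
  have hne : (𝓝[Icc a b \ {x₀}] x₀).NeBot :=
    accPt_principal_iff_nhdsWithin.mp (uniqueDiffOn_Icc hab x₀ hx₀).accPt
  refine ge_of_tendsto_of_frequently (hasDerivWithinAt_iff_tendsto_slope.mp hf')
    (frequently_iff.mpr fun {U} hU => ?_)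
  obtain ⟨ε, hε, hball⟩ := Metric.mem_nhdsWithin_iff.mp hU
  obtain ⟨y, ⟨hyI, hyx₀⟩, hyε⟩ :=
    hne.nonempty_of_mem (inter_mem_nhdsWithin _ (Metric.ball_mem_nhds x₀ hε))
  rw [Metric.mem_ball, Real.dist_eq, abs_lt] at hyε
  have hfy : f x₀ ≤ f y := hmin hyI
  have hsub (ξ : ℝ) (hξ : ξ ∈ uIoo x₀ y) : ξ ∈ U := by
    refine hball ⟨?_, (uIcc_subset_Icc hx₀ hyI) (uIoo_subset_uIcc_self hξ), ?_⟩ <;>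
      simp only [uIoo, mem_Ioo, min_lt_iff, lt_max_iff] at hξ
    · rw [Metric.mem_ball, Real.dist_eq, abs_lt]
      constructor <;> rcases hξ with ⟨h1 | h1, h2 | h2⟩ <;> linarith
    · rintro rfl
      rcases hξ with ⟨h1 | h1, h2 | h2⟩ <;> linarith
  -- The mean value theorem between `x₀` and `y` gives a point `ξ` where `f' ξ` has the sign of
  -- `ξ - x₀`, so that the difference quotient of `f'` at `ξ` is nonnegative.
  rw [mem_singleton_iff] at hyx₀
  rcases lt_or_gt_of_ne hyx₀ with hlt | hgt
  · obtain ⟨ξ, hξ, hfξ⟩ := exists_eq_slope_of_hasDerivWithinAt_Icc hf hyI hx₀ hlt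
    refine ⟨ξ, hsub ξ (by rwa [uIoo_of_ge hlt.le]), ?_⟩
    rw [slope_def_field, hcrit, sub_zero, hfξ, slope_def_field]
    exact div_nonneg_of_nonpos (div_nonpos_of_nonpos_of_nonneg (by linarith) (by linarith))
      (by linarith [hξ.2])
  · obtain ⟨ξ, hξ, hfξ⟩ := exists_eq_slope_of_hasDerivWithinAt_Icc hf hx₀ hyI hgt
    refine ⟨ξ, hsub ξ (by rwa [uIoo_of_le hgt.le]), ?_⟩
    rw [slope_def_field, hcrit, sub_zero, hfξ, slope_def_field]
    exact div_nonneg (div_nonneg (by linarith) (by linarith)) (by linarith [hξ.1])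

lemma integral_eq_sub_of_hasDerivWithinAt_Icc {f f' : ℝ → ℝ} {a b : ℝ} (hab : a ≤ b)
    (hf : ∀ x ∈ Icc a b, HasDerivWithinAt f (f' x) (Icc a b) x)
    (hint : IntervalIntegrable f' volume a b) : ∫ x in a..b, f' x = f b - f a :=
  integral_eq_sub_of_hasDerivAt_of_le hab (fun x hx => (hf x hx).continuousWithinAt)
    (fun x hx => (hf x (Ioo_subset_Icc_self hx)).hasDerivAt (Icc_mem_nhds hx.1 hx.2)) hint

theorem integral_eq_initial_of_integral_timeDeriv_eq_zero {q q' : ℝ → ℝ → ℝ} {a b T t : ℝ}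
    (hab : a ≤ b) (hq : ContinuousOn (Function.uncurry q) (Icc a b ×ˢ Icc 0 T))
    (hq' : ContinuousOn (Function.uncurry q') (Icc a b ×ˢ Icc 0 T))
    (hqt : ∀ x ∈ Icc a b, ∀ τ ∈ Icc 0 T, HasDerivWithinAt (q x) (q' x τ) (Icc 0 T) τ)
    (hzero : ∀ τ ∈ Icc 0 T, ∫ x in a..b, q' x τ = 0) (ht : t ∈ Icc 0 T) :
    ∫ x in a..b, q x t = ∫ x in a..b, q x 0 := by
  have hsub : Icc 0 t ⊆ Icc 0 T := Icc_subset_Icc le_rfl ht.2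
  have hint (τ) (hτ : τ ∈ Icc 0 T) : IntervalIntegrable (q · τ) volume a b :=
    (hq.uncurry_right τ hτ).intervalIntegrable_of_Icc hab
  rw [← sub_eq_zero, ← integral_sub (hint t ht) (hint 0 (hsub (left_mem_Icc.mpr ht.1)))]
  calc ∫ x in a..b, (q x t - q x 0)
      = ∫ x in a..b, ∫ τ in 0..t, q' x τ := by
        refine integral_congr fun x hx => ?_
        rw [uIcc_of_le hab] at hx
        exact (integral_eq_sub_of_hasDerivWithinAt_Icc ht.1
          (fun τ hτ => (hqt x hx τ (hsub hτ)).mono hsub)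
          (((hq'.uncurry_left x hx).mono hsub).intervalIntegrable_of_Icc ht.1)).symm
    _ = ∫ τ in 0..t, ∫ x in a..b, q' x τ := by
        refine intervalIntegral_intervalIntegral_swap
          ((hq'.integrableOn_compact (isCompact_Icc.prod isCompact_Icc)).mono_set ?_)
        rw [uIoc_of_le hab, uIoc_of_le ht.1]
        exact prod_mono Ioc_subset_Icc_self (Ioc_subset_Icc_self.trans hsub)
    _ = 0 := by
        rw [integral_congr (g := fun _ => 0) fun τ hτ => hzero τ (hsub (uIcc_of_le ht.1 ▸ hτ)),
          intervalIntegral.integral_zero]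

lemma exists_first_hitting {u : ℝ → ℝ → ℝ} {a b T c : ℝ}
    (hu : ContinuousOn (Function.uncurry u) (Icc a b ×ˢ Icc 0 T))
    (hinit : ∀ x ∈ Icc a b, c < u x 0) (hhit : ∃ x ∈ Icc a b, ∃ t ∈ Icc 0 T, u x t ≤ c) :
    ∃ x₀ ∈ Icc a b, ∃ t₀ ∈ Ioc 0 T, u x₀ t₀ = c ∧ (∀ x ∈ Icc a b, c ≤ u x t₀) ∧
      ∀ t ∈ Ico 0 t₀, ∀ x ∈ Icc a b, c < u x t := by
  obtain ⟨x₁, hx₁, t₁, ht₁, hle₁⟩ := hhit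
  set K := (Icc a b ×ˢ Icc 0 T) ∩ Function.uncurry u ⁻¹' Iic c
  have hK : IsCompact K := (isCompact_Icc.prod isCompact_Icc).of_isClosed_subset
    (hu.preimage_isClosed_of_isClosed (isClosed_Icc.prod isClosed_Icc) isClosed_Iic)
    inter_subset_left
  obtain ⟨⟨x₀, t₀⟩, ⟨⟨hx₀, ht₀⟩, hle₀⟩, hmin⟩ :=
    hK.exists_isMinOn ⟨(x₁, t₁), ⟨hx₁, ht₁⟩, hle₁⟩ continuous_snd.continuousOn
  have hbefore : ∀ t ∈ Ico 0 t₀, ∀ x ∈ Icc a b, c < u x t := by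
    intro t ht x hx
    by_contra! hle
    have : t₀ ≤ t := hmin (show (x, t) ∈ K from ⟨⟨hx, ht.1, ht.2.le.trans ht₀.2⟩, hle⟩)
    exact this.not_gt ht.2
  have ht₀pos : 0 < t₀ := by
    refine ht₀.1.lt_of_ne fun h => ?_
    subst h
    exact (hinit x₀ hx₀).not_ge hle₀
  have hafter : ∀ x ∈ Icc a b, c ≤ u x t₀ := by
    intro x hx
    have hcont : ContinuousWithinAt (u x) (Ico 0 t₀) t₀ :=
      ((hu.uncurry_left x hx).continuousWithinAt ht₀).mono fun t ht => ⟨ht.1, ht.2.le.trans ht₀.2⟩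
    refine ContinuousWithinAt.closure_le ?_ continuousWithinAt_const hcont
      fun t ht => (hbefore t ht x hx).le
    rw [closure_Ico ht₀pos.ne]
    exact right_mem_Icc.mpr ht₀pos.le
  exact ⟨x₀, hx₀, t₀, ⟨ht₀pos, ht₀.2⟩, le_antisymm hle₀ (hafter x₀ hx₀), hafter, hbefore⟩

theorem neumann_minimum_principle {u ux uxx ut : ℝ → ℝ → ℝ} {a b T c : ℝ} (hab : a < b)
    (hu : ContinuousOn (Function.uncurry u) (Icc a b ×ˢ Icc 0 T))
    (hux : ∀ t ∈ Icc 0 T, ∀ x ∈ Icc a b, HasDerivWithinAt (u · t) (ux x t) (Icc a b) x)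
    (huxx : ∀ t ∈ Icc 0 T, ∀ x ∈ Icc a b, HasDerivWithinAt (ux · t) (uxx x t) (Icc a b) x)
    (hut : ∀ x ∈ Icc a b, ∀ t ∈ Icc 0 T, HasDerivWithinAt (u x) (ut x t) (Icc 0 T) t)
    (hbc : ∀ t ∈ Icc 0 T, ux a t = 0 ∧ ux b t = 0)
    (hsuper : ∀ x ∈ Icc a b, ∀ t ∈ Icc 0 T, u x t = c → ux x t = 0 → uxx x t < ut x t)
    (hinit : ∀ x ∈ Icc a b, c < u x 0) :
    ∀ x ∈ Icc a b, ∀ t ∈ Icc 0 T, c < u x t := by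
  by_contra! hhit
  obtain ⟨x₀, hx₀, t₀, ht₀, hval, hafter, hbefore⟩ := exists_first_hitting hu hinit hhit
  have ht₀T : t₀ ∈ Icc 0 T := Ioc_subset_Icc_self ht₀
  have hminx : IsMinOn (u · t₀) (Icc a b) x₀ := fun x hx =>
    show u x₀ t₀ ≤ u x t₀ from hval ▸ hafter x hx
  have hcrit : ux x₀ t₀ = 0 := by
    rcases hx₀.1.eq_or_lt with rfl | ha
    · exact (hbc t₀ ht₀T).1
    rcases hx₀.2.eq_or_lt with rfl | hb
    · exact (hbc t₀ ht₀T).2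
    exact (hminx.isLocalMin (Icc_mem_nhds ha hb)).hasDerivAt_eq_zero
      ((hux t₀ ht₀T x₀ hx₀).hasDerivAt (Icc_mem_nhds ha hb))
  have hxx : 0 ≤ uxx x₀ t₀ :=
    (huxx t₀ ht₀T x₀ hx₀).nonneg_of_isMinOn_Icc hab hx₀ (hux t₀ ht₀T) hminx hcrit
  have hmint : IsMinOn (u x₀) (Icc 0 t₀) t₀ := by
    intro t ht
    change u x₀ t₀ ≤ u x₀ t
    rcases ht.2.eq_or_lt with rfl | hlt
    · exact le_rfl
    · exact hval ▸ (hbefore t ⟨ht.1, hlt⟩ x₀ hx₀).le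
  have ht : ut x₀ t₀ ≤ 0 := ((hut x₀ hx₀ t₀ ht₀T).mono
    (Icc_subset_Icc le_rfl ht₀.2)).nonpos_of_isMinOn_Icc_right ht₀.1 hmint
  linarith [hsuper x₀ hx₀ t₀ ht₀T hval hcrit]

namespace TearFilmSolution

variable {L T m n : ℝ} {Sbar : ℝ → ℝ} (sol : TearFilmSolution L T m n Sbar)

noncomputable def flux (x t : ℝ) : ℝ :=
  sol.h x t * sol.sx x t - sol.h x t ^ n * sol.hxxx x t * sol.s x t

lemma hasDerivWithinAt_flux {x t : ℝ} (hx : x ∈ Icc 0 L) (ht : t ∈ Icc 0 T) :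
    HasDerivWithinAt (sol.flux · t) (sol.ht x t * sol.s x t + sol.h x t * sol.st x t)
      (Icc 0 L) x := by
  have hpos := sol.h_pos x hx t ht
  have hpow := (sol.hasDeriv_hx t ht x hx).rpow_const (p := n) (Or.inl hpos.ne')
  refine (((sol.hasDeriv_hx t ht x hx).mul (sol.hasDeriv_sxx t ht x hx)).sub
    ((hpow.mul (sol.hasDeriv_hxxxx t ht x hx)).mul (sol.hasDeriv_sx t ht x hx))).congr_deriv ?_
  rw [sol.pde_h x hx t ht, sol.pde_s x hx t ht, Real.rpow_sub_one hpos.ne',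
    Real.rpow_sub_one hpos.ne', Pi.mul_apply]
  field_simp
  ring

lemma integral_h_mul_s_eq (hL : 0 ≤ L) {t : ℝ} (ht : t ∈ Icc 0 T) :
    ∫ x in (0:ℝ)..L, sol.h x t * sol.s x t = ∫ x in (0:ℝ)..L, sol.h x 0 * sol.s x 0 := by
  refine integral_eq_initial_of_integral_timeDeriv_eq_zero
    (q := fun x t => sol.h x t * sol.s x t)
    (q' := fun x t => sol.ht x t * sol.s x t + sol.h x t * sol.st x t) hL
    (sol.cont_h.mul sol.cont_s)
    ((sol.cont_ht.mul sol.cont_s).add (sol.cont_h.mul sol.cont_st))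
    (fun x hx τ hτ => (sol.hasDeriv_ht x hx τ hτ).mul (sol.hasDeriv_st x hx τ hτ))
    (fun τ hτ => ?_) ht
  obtain ⟨-, -, hxxx0, hxxxL, hsx0, hsxL⟩ := sol.bc τ hτ
  rw [integral_eq_sub_of_hasDerivWithinAt_Icc hL (fun x hx => sol.hasDerivWithinAt_flux hx hτ)
    (((sol.cont_ht.uncurry_right τ hτ).mul (sol.cont_s.uncurry_right τ hτ)).add
      ((sol.cont_h.uncurry_right τ hτ).mul (sol.cont_st.uncurry_right τ hτ))
      |>.intervalIntegrable_of_Icc hL)]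
  simp [flux, hxxxL, hsx0, hsxL, hxxx0]

lemma le_s_of_le_initial (hL : 0 < L) {lam : ℝ} (hlam : 0 < lam)
    (hlamS : ∀ x ∈ Icc 0 L, lam ≤ Sbar x)
    (hs0 : ∀ x ∈ Icc 0 L, lam ≤ sol.s x 0) {x t : ℝ} (hx : x ∈ Icc 0 L) (ht : t ∈ Icc 0 T) :
    lam ≤ sol.s x t := by
  have hlevel (c : ℝ) (hc : 0 < c) (hclam : c < lam) : c < sol.s x t := by
    refine neumann_minimum_principle hL sol.cont_s sol.hasDeriv_sx sol.hasDeriv_sxx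
      sol.hasDeriv_st (fun τ hτ => ⟨(sol.bc τ hτ).2.2.2.2.1, (sol.bc τ hτ).2.2.2.2.2⟩)
      (fun y hy τ hτ hsc hsx => ?_) (fun y hy => hclam.trans_le (hs0 y hy)) x hx t ht
    have hreaction : 0 < c * (Sbar y - c) * sol.h y τ ^ (m - 1) :=
      mul_pos (mul_pos hc (sub_pos.mpr (hclam.trans_le (hlamS y hy))))
        (Real.rpow_pos_of_pos (sol.h_pos y hy τ hτ) _)
    rw [sol.pde_s y hy τ hτ, hsc, hsx]
    linarith
  refine le_of_forall_lt fun c hc => ?_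
  exact (le_max_left c (lam / 2)).trans_lt
    (hlevel _ (lt_max_of_lt_right (half_pos hlam)) (max_lt hc (half_lt_self hlam)))

end TearFilmSolution

theorem fluid_mass_bound_general
    (L T m n : ℝ) (hL : 0 < L)
    (Sbar : ℝ → ℝ)
    (sol : TearFilmSolution L T m n Sbar)
    (lam : ℝ) (hlam : 0 < lam)
    (hlamS : ∀ x ∈ Icc (0:ℝ) L, lam ≤ Sbar x)
    (hs0 : ∀ x ∈ Icc (0:ℝ) L,
      lam ≤ sol.s x 0 ∧ sol.s x 0 ≤ sSup (Sbar '' Icc (0:ℝ) L)) :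
    ∀ t ∈ Icc (0:ℝ) T,
      (∫ x in (0:ℝ)..L, sol.h x t)
        ≤ (1 / lam) * ∫ x in (0:ℝ)..L, sol.h x 0 * sol.s x 0 := by
  intro t ht
  rw [one_div, inv_mul_eq_div, le_div_iff₀ hlam, ← sol.integral_h_mul_s_eq hL.le ht,
    ← intervalIntegral.integral_mul_const]
  refine integral_mono_on hL.le ((sol.cont_h.uncurry_right t ht).mul continuousOn_const
    |>.intervalIntegrable_of_Icc hL.le) ((sol.cont_h.uncurry_right t ht).mul
      (sol.cont_s.uncurry_right t ht) |>.intervalIntegrable_of_Icc hL.le) fun x hx => ?_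
  exact mul_le_mul_of_nonneg_left
    (sol.le_s_of_le_initial hL hlam hlamS (fun y hy => (hs0 y hy).1) hx ht) (sol.h_pos x hx t ht).le

/-- Uniform bound for the fluid mass: `∫₀^L h(x,t) dx ≤ (1/λ) ∫₀^L h₀ s₀ dx`. -/
theorem fluid_mass_bound
    (L T m n : ℝ) (hL : 0 < L) (hT : 0 < T) (hm : 1 ≤ m)
    (Sbar : ℝ → ℝ) (hScont : ContinuousOn Sbar (Icc (0:ℝ) L))
    (sol : TearFilmSolution L T m n Sbar)
    (lam : ℝ) (hlam : 0 < lam)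
    (hlamS : ∀ x ∈ Icc (0:ℝ) L, lam ≤ Sbar x)
    (hs0 : ∀ x ∈ Icc (0:ℝ) L,
      lam ≤ sol.s x 0 ∧ sol.s x 0 ≤ sSup (Sbar '' Icc (0:ℝ) L)) :
    ∀ t ∈ Icc (0:ℝ) T,
      (∫ x in (0:ℝ)..L, sol.h x t)
        ≤ (1 / lam) * ∫ x in (0:ℝ)..L, sol.h x 0 * sol.s x 0 :=
  fluid_mass_bound_general L T m n hL Sbar sol lam hlam hlamS hs0
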